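/- For every real α with 1 < α ≤ 2 and every integer M ≥ 2, one has M₁(α) > 0 and the matrix A is symmetric positive definite; more precisely, M₁(α)·‖x‖² ≤ xᵀAx ≤ ‖x‖² for every x ∈ ℝ^{M−1} (equivalently, every eigenvalue of A lies in the interval [M₁(α), 1]). -/

import Mathlib

open Matrix

/-- `ϱ₂ = (3α³−19α²+36α−16)/(24α)`. -/
noncomputable def rho2 (α : ℝ) : ℝ := (3 * α ^ 3 - 19 * α ^ 2 + 36 * α - 16) / (24 * α)

/-- `M₁(α) = (−3α³+19α²−30α+16)/(6α)`. -/
noncomputable def M1 (α : ℝ) : ℝ := (-3 * α ^ 3 + 19 * α ^ 2 - 30 * α + 16) / (6 * α)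

/-- The `(M−1)×(M−1)` tridiagonal matrix with diagonal `1−2ϱ₂` and off-diagonal `ϱ₂`. -/
noncomputable def matA (α : ℝ) (M : ℕ) : Matrix (Fin (M - 1)) (Fin (M - 1)) ℝ :=
  fun i j =>
    if (i : ℕ) = (j : ℕ) then 1 - 2 * rho2 α
    else if (i : ℕ) + 1 = (j : ℕ) ∨ (j : ℕ) + 1 = (i : ℕ) then rho2 α
    else 0

/-!
Write `A = (1 - 2ϱ₂) • 1 + ϱ₂ • Adj`, where `Adj` is the adjacency matrix of the path graph on
`M - 1` vertices. Every vertex of the path has degree at most `2`, so the Schur test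
(`2 |xᵢ xⱼ| ≤ xᵢ² + xⱼ²`, summed over the symmetric matrix) gives `|xᵀ Adj x| ≤ 2 ‖x‖²`.
For `1 < α ≤ 2` one has `0 ≤ ϱ₂ < 1/4`, hence `(1 - 4ϱ₂) ‖x‖² ≤ xᵀ A x ≤ ‖x‖²`, and
`1 - 4ϱ₂ = M₁(α)`.
-/

open Finset SimpleGraph

theorem Matrix.IsSymm.abs_dotProduct_mulVec_le {ι : Type*} [Fintype ι] {N : Matrix ι ι ℝ}
    (hN : N.IsSymm) {r : ℝ} (hrow : ∀ i, ∑ j, |N i j| ≤ r) (x : ι → ℝ) :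
    |x ⬝ᵥ N *ᵥ x| ≤ r * ∑ i, x i ^ 2 := by
  have hterm : ∀ i j, 2 * |x i * (N i j * x j)| ≤ |N i j| * x i ^ 2 + |N j i| * x j ^ 2 := by
    intro i j
    rw [← hN.apply i j, abs_mul, abs_mul, mul_left_comm, ← mul_assoc 2, ← sq_abs (x i),
      ← sq_abs (x j)]
    nlinarith [mul_nonneg (abs_nonneg (N j i)) (sq_nonneg (|x i| - |x j|))]
  have hrows : ∑ i, ∑ j, |N i j| * x i ^ 2 ≤ r * ∑ i, x i ^ 2 := by
    rw [mul_sum]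
    refine sum_le_sum fun i _ => ?_
    rw [← sum_mul]
    exact mul_le_mul_of_nonneg_right (hrow i) (sq_nonneg _)
  calc |x ⬝ᵥ N *ᵥ x| = |∑ i, ∑ j, x i * (N i j * x j)| := by
        simp only [dotProduct, mulVec, mul_sum]
    _ ≤ ∑ i, ∑ j, |x i * (N i j * x j)| :=
        (abs_sum_le_sum_abs _ _).trans (sum_le_sum fun i _ => abs_sum_le_sum_abs _ _)
    _ ≤ ∑ i, ∑ j, (|N i j| * x i ^ 2 + |N j i| * x j ^ 2) / 2 :=
        sum_le_sum fun i _ => sum_le_sum fun j _ => by linarith [hterm i j]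
    _ = ∑ i, ∑ j, |N i j| * x i ^ 2 := by
        simp only [add_div, sum_add_distrib]
        rw [sum_comm (f := fun i j => |N j i| * x j ^ 2 / 2), ← sum_add_distrib]
        simp only [← sum_add_distrib, add_halves]
    _ ≤ r * ∑ i, x i ^ 2 := hrows

theorem SimpleGraph.abs_dotProduct_adjMatrix_mulVec_le {V : Type*} [Fintype V]
    (G : SimpleGraph V) [DecidableRel G.Adj] {Δ : ℕ} (hΔ : ∀ v, G.degree v ≤ Δ) (x : V → ℝ) :
    |x ⬝ᵥ G.adjMatrix ℝ *ᵥ x| ≤ Δ * ∑ v, x v ^ 2 := by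
  refine G.isSymm_adjMatrix.abs_dotProduct_mulVec_le (fun v => ?_) x
  have hrow : ∑ w, |G.adjMatrix ℝ v w| = G.degree v := by
    simp [adjMatrix_apply, apply_ite, sum_boole, ← card_neighborFinset_eq_degree,
      neighborFinset_eq_filter]
  rw [hrow]
  exact_mod_cast hΔ v

instance SimpleGraph.decidableRelPathGraphAdj (n : ℕ) : DecidableRel (pathGraph n).Adj :=
  fun _ _ => decidable_of_iff' _ pathGraph_adj

theorem SimpleGraph.degree_pathGraph_le_two {n : ℕ} (v : Fin n) : (pathGraph n).degree v ≤ 2 :=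
  calc (pathGraph n).degree v = ((pathGraph n).neighborFinset v |>.map Fin.valEmbedding).card :=
        (card_map _).symm
    _ ≤ ({(v : ℕ) - 1, (v : ℕ) + 1} : Finset ℕ).card := card_le_card fun j hj => by
        simp only [mem_map, mem_neighborFinset, pathGraph_adj, Fin.valEmbedding_apply] at hj
        obtain ⟨w, hw, rfl⟩ := hj
        simp only [mem_insert, mem_singleton]
        omega
    _ ≤ 2 := card_le_two

lemma rho2_eq (α : ℝ) : rho2 α = ((2 - α) * (α - 1) * (10 - 3 * α) + 4) / (24 * α) := by
  unfold rho2
  ring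

lemma rho2_nonneg {α : ℝ} (h1 : 1 ≤ α) (h2 : α ≤ 2) : 0 ≤ rho2 α := by
  rw [rho2_eq]
  have : 0 ≤ (2 - α) * (α - 1) * (10 - 3 * α) := by
    apply mul_nonneg (mul_nonneg _ _) <;> linarith
  positivity

lemma rho2_lt_one_quarter {α : ℝ} (h1 : 1 ≤ α) (h2 : α ≤ 2) : rho2 α < 1 / 4 := by
  rw [rho2_eq, div_lt_iff₀ (by positivity)]
  have : (2 - α) * (α - 1) * (10 - 3 * α) ≤ 1 / 4 * 7 := by
    apply mul_le_mul _ _ _ _ <;> nlinarith [sq_nonneg (α - 3 / 2)]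
  linarith

lemma M1_eq_one_sub_four_mul_rho2 {α : ℝ} (hα : α ≠ 0) : M1 α = 1 - 4 * rho2 α := by
  unfold M1 rho2
  field_simp
  ring

lemma matA_eq (α : ℝ) (M : ℕ) :
    matA α M = (1 - 2 * rho2 α) • (1 : Matrix _ _ ℝ) + rho2 α • (pathGraph (M - 1)).adjMatrix ℝ := by
  ext i j
  simp only [matA, Matrix.add_apply, Matrix.smul_apply, one_apply, adjMatrix_apply, pathGraph_adj,
    Fin.ext_iff, smul_eq_mul]
  split_ifs <;> first | omega | ring

lemma dotProduct_matA_mulVec (α : ℝ) (M : ℕ) (x : Fin (M - 1) → ℝ) :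
    x ⬝ᵥ matA α M *ᵥ x = (1 - 2 * rho2 α) * ∑ i, x i ^ 2
      + rho2 α * (x ⬝ᵥ (pathGraph (M - 1)).adjMatrix ℝ *ᵥ x) := by
  rw [matA_eq, add_mulVec, smul_mulVec, smul_mulVec, one_mulVec, dotProduct_add, dotProduct_smul,
    dotProduct_smul, smul_eq_mul, smul_eq_mul]
  simp only [dotProduct, sq]

theorem matA_posDef_general (α : ℝ) (h1 : 1 < α) (h2 : α ≤ 2) (M : ℕ) :
    0 < M1 α ∧ (matA α M).IsSymm ∧
    ∀ x : Fin (M - 1) → ℝ,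
      M1 α * (∑ j, x j ^ 2) ≤ dotProduct x ((matA α M).mulVec x) ∧
      dotProduct x ((matA α M).mulVec x) ≤ ∑ j, x j ^ 2 := by
  have hρ := rho2_nonneg h1.le h2
  rw [M1_eq_one_sub_four_mul_rho2 (by linarith)]
  refine ⟨by linarith [rho2_lt_one_quarter h1.le h2], ?_, fun x => ?_⟩
  · rw [matA_eq]
    exact (isSymm_one.smul _).add ((isSymm_adjMatrix _).smul _)
  · obtain ⟨hlow, hupp⟩ := abs_le.mp
      ((pathGraph (M - 1)).abs_dotProduct_adjMatrix_mulVec_le degree_pathGraph_le_two x)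
    rw [dotProduct_matA_mulVec]
    push_cast at hlow hupp
    constructor <;> nlinarith

/-- For `1 < α ≤ 2` and `M ≥ 2`: `M₁(α) > 0`, `A` is symmetric, and
`M₁(α)‖x‖² ≤ xᵀAx ≤ ‖x‖²` for every real vector `x`; in particular `A` is
symmetric positive definite. -/
theorem matA_posDef (α : ℝ) (h1 : 1 < α) (h2 : α ≤ 2) (M : ℕ) (hM : 2 ≤ M) :
    0 < M1 α ∧ (matA α M).IsSymm ∧
    ∀ x : Fin (M - 1) → ℝ,
      M1 α * (∑ j, x j ^ 2) ≤ dotProduct x ((matA α M).mulVec x) ∧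
      dotProduct x ((matA α M).mulVec x) ≤ ∑ j, x j ^ 2 :=
  matA_posDef_general α h1 h2 M
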